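/- arXiv:2605.09519 — 8 statements merged into one kernel-verified Lean document; each statement's English description precedes it below -/
import Mathlib

section
/- Let Π be a ground logic program (a finite set of rules A ← B ∧ N where A is a disjunction of atoms, B a conjunction of atoms, and N a negative formula). If Π' is a subset of Π, I is a stable model of Π' (i.e., I is a minimal model of the reduct (Π')^I), and I classically satisfies every rule of Π, then I is a stable model of Π. -/
open Finset Filter Real
open scoped Classical

/-- A ground rule `A ← B ∧ N`: `head` is the disjunction of atoms `A`,
`body` the conjunction of atoms `B`, and `neg` gives the satisfaction
relation of the negative formula `N`. -/
structure GRule (σ : Type) where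
  head : Finset σ
  body : Finset σ
  neg : Finset σ → Prop

namespace GRule
variable {σ : Type}

/-- `I` classically satisfies the rule `B ∧ N → A`. -/
def sat (r : GRule σ) (I : Finset σ) : Prop :=
  r.body ⊆ I → r.neg I → ∃ a ∈ r.head, a ∈ I

/-- `J` satisfies the reduct `Γ^I` of the program `Γ` relative to `I`. -/
def satReduct (Γ : Set (GRule σ)) (I J : Finset σ) : Prop :=
  ∀ r ∈ Γ, r.neg I → r.body ⊆ J → ∃ a ∈ r.head, a ∈ J

/-- `I` is a stable model of `Γ`: a minimal model of the reduct `Γ^I`. -/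
def stable (Γ : Set (GRule σ)) (I : Finset σ) : Prop :=
  satReduct Γ I I ∧ ∀ J, J ⊂ I → ¬ satReduct Γ I J

/-- Indexed version of reduct satisfaction (a program given by an index set of rules). -/
def satReductIdx {ι : Type} (rule : ι → GRule σ) (S : Set ι) (I J : Finset σ) : Prop :=
  ∀ i ∈ S, (rule i).neg I → (rule i).body ⊆ J → ∃ a ∈ (rule i).head, a ∈ J

/-- Indexed version of stable models. -/
def stableIdx {ι : Type} (rule : ι → GRule σ) (S : Set ι) (I : Finset σ) : Prop :=
  satReductIdx rule S I I ∧ ∀ J, J ⊂ I → ¬ satReductIdx rule S I J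

end GRule

namespace GRule
variable {σ : Type}

theorem satReduct_self_of_sat {Γ : Set (GRule σ)} {I : Finset σ} (h : ∀ r ∈ Γ, r.sat I) :
    satReduct Γ I I :=
  fun r hr hneg hbody => h r hr hbody hneg

theorem satReduct.anti {Γ Γ' : Set (GRule σ)} {I J : Finset σ} (hsub : Γ' ⊆ Γ)
    (h : satReduct Γ I J) : satReduct Γ' I J :=
  fun r hr => h r (hsub hr)

end GRule

theorem stmt0_general {σ : Type} (Pg Pg' : Set (GRule σ))
    (I : Finset σ) (hsub : Pg' ⊆ Pg)
    (hst : GRule.stable Pg' I) (hsat : ∀ r ∈ Pg, r.sat I) :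
    GRule.stable Pg I :=
  ⟨GRule.satReduct_self_of_sat hsat, fun J hJ hred => hst.2 J hJ (hred.anti hsub)⟩

/-- Proposition 1: if Π' ⊆ Π, I is a stable model of Π', and I satisfies every rule of Π,
then I is a stable model of Π. -/
theorem stmt0 {σ : Type} (Pg Pg' : Set (GRule σ)) (hfin : Pg.Finite)
    (I : Finset σ) (hsub : Pg' ⊆ Pg)
    (hst : GRule.stable Pg' I) (hsat : ∀ r ∈ Pg, r.sat I) :
    GRule.stable Pg I :=
  stmt0_general Pg Pg' I hsub hst hsat
end

section
/- Let Π be a finite ground logic program with n rules, all given hard weight α, and suppose Π has at least one stable model. Then in the limit α → ∞, the normalized weight P(I) = lim_{α→∞} W(I)/Σ_J W(J) (where W(I) = exp(α·|Π_I|) if I is a stable model of Π_I and 0 otherwise, summing over J in SM[Π with weights]) equals 1/k for every stable model I of Π, where k is the number of stable models of Π, and equals 0 for every other interpretation. -/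
open Finset Filter Real
open scoped Classical

/-- Unnormalized weight of `I` when all rules are hard with weight `α`. -/
noncomputable def Whard {σ ι : Type} [Fintype ι] (rule : ι → GRule σ) (α : ℝ)
    (I : Finset σ) : ℝ :=
  Set.indicator {J | GRule.stableIdx rule {i | (rule i).sat J} J}
    (fun J => Real.exp (α * ((Finset.univ.filter (fun i => (rule i).sat J)).card : ℝ))) I

/-!
Dividing numerator and denominator by `exp (α n)`, the weight of an interpretation `J` becomes
`exp (α (|Π_J| - n))` on the support of `W`. Since `|Π_J| ≤ n`, this tends to `1` when `J`
satisfies every rule and to `0` otherwise, and an interpretation satisfying every rule is a stable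
model of `Π_J` exactly when it is a stable model of `Π`. So the normalized weights converge to the
uniform distribution on the stable models of `Π`.
-/

lemma tendsto_exp_mul_atTop_of_nonpos {c : ℝ} (hc : c ≤ 0) :
    Tendsto (fun α : ℝ => Real.exp (α * c)) atTop (nhds (if c = 0 then 1 else 0)) := by
  rcases hc.lt_or_eq with hneg | rfl
  · rw [if_neg hneg.ne]
    exact Real.tendsto_exp_atBot.comp (tendsto_id.atTop_mul_const_of_neg hneg)
  · simp

section ZeroTemperature

variable {κ : Type} (A : Set κ) (s : κ → ℝ) (M : ℝ)

def maximizers : Set κ := {J | J ∈ A ∧ s J = M}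

lemma tendsto_indicator_exp_mul_div_exp (hs : ∀ J ∈ A, s J ≤ M) (J : κ) :
    Tendsto (fun α : ℝ => A.indicator (fun J => Real.exp (α * s J)) J * Real.exp (-(α * M)))
      atTop (nhds ((maximizers A s M).indicator 1 J)) := by
  by_cases hJ : J ∈ A
  · have hscaled : ∀ α : ℝ, A.indicator (fun J => Real.exp (α * s J)) J * Real.exp (-(α * M))
        = Real.exp (α * (s J - M)) := fun α => by
      rw [Set.indicator_of_mem hJ, ← Real.exp_add]; ring_nf
    have hlim : (maximizers A s M).indicator (1 : κ → ℝ) J = if s J - M = 0 then 1 else 0 := by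
      simp [maximizers, Set.indicator, hJ, sub_eq_zero]
    simp only [hscaled, hlim]
    exact tendsto_exp_mul_atTop_of_nonpos (sub_nonpos.2 (hs J hJ))
  · have hJ' : J ∉ maximizers A s M := fun h => hJ h.1
    simp only [Set.indicator_of_notMem hJ, Set.indicator_of_notMem hJ', zero_mul]
    exact tendsto_const_nhds

/-- Zero-temperature limit of a Gibbs distribution. -/
theorem tendsto_indicator_exp_mul_div_sum [Fintype κ] (hs : ∀ J ∈ A, s J ≤ M)
    (hmax : (maximizers A s M).Nonempty) (I : κ) :
    Tendsto (fun α : ℝ => A.indicator (fun J => Real.exp (α * s J)) I /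
        ∑ J, A.indicator (fun J => Real.exp (α * s J)) J)
      atTop (nhds ((maximizers A s M).indicator
        (fun _ => 1 / (Nat.card (maximizers A s M) : ℝ)) I)) := by
  have hcard : (0 : ℝ) < Nat.card (maximizers A s M) := by
    have := hmax.to_subtype
    exact_mod_cast Nat.card_pos
  have hsum : ∑ J, (maximizers A s M).indicator (1 : κ → ℝ) J
      = Nat.card (maximizers A s M) := by
    simp [Set.indicator_apply, Finset.sum_boole, Nat.card_eq_fintype_card,
      Fintype.card_subtype]
  have hlim := (tendsto_indicator_exp_mul_div_exp A s M hs I).div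
    (tendsto_finsetSum Finset.univ fun J _ => tendsto_indicator_exp_mul_div_exp A s M hs J)
    (hsum ▸ hcard.ne')
  rw [hsum] at hlim
  refine (hlim.congr fun α => ?_).trans_eq ?_
  · rw [Pi.div_apply, ← Finset.sum_mul, mul_div_mul_right _ _ (Real.exp_ne_zero _)]
  · by_cases hI : I ∈ maximizers A s M <;> simp [hI]

end ZeroTemperature

namespace GRule

variable {σ ι : Type} (rule : ι → GRule σ)

lemma sat_of_stableIdx_univ {J : Finset σ} (hJ : stableIdx rule Set.univ J) (i : ι) :
    (rule i).sat J :=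
  fun hbody hneg => hJ.1 i trivial hneg hbody

lemma stableIdx_univ_iff (J : Finset σ) :
    stableIdx rule Set.univ J ↔ stableIdx rule {i | (rule i).sat J} J ∧ ∀ i, (rule i).sat J := by
  constructor
  · intro hJ
    have hall := sat_of_stableIdx_univ rule hJ
    have hsat : {i | (rule i).sat J} = Set.univ := Set.eq_univ_of_forall hall
    exact ⟨hsat ▸ hJ, hall⟩
  · rintro ⟨hJ, hall⟩
    have hsat : {i | (rule i).sat J} = Set.univ := Set.eq_univ_of_forall hall
    rwa [hsat] at hJ

end GRule

theorem stmt5_general {σ ι : Type} [Fintype σ] [Fintype ι]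
    (rule : ι → GRule σ)
    (h : ∃ I : Finset σ, GRule.stableIdx rule Set.univ I) (I : Finset σ) :
    Tendsto (fun α : ℝ => Whard rule α I / ∑ J : Finset σ, Whard rule α J) atTop
      (nhds (if GRule.stableIdx rule Set.univ I
        then 1 / (Nat.card {J : Finset σ // GRule.stableIdx rule Set.univ J} : ℝ)
        else 0)) := by
  set satCount : Finset σ → ℝ := fun J => (univ.filter fun i => (rule i).sat J).card
  have hbound : ∀ J, satCount J ≤ Fintype.card ι := fun J =>
    Nat.mono_cast (card_filter_le _ _)
  have hmaximizers : maximizers {J | GRule.stableIdx rule {i | (rule i).sat J} J} satCount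
      (Fintype.card ι) = {J | GRule.stableIdx rule Set.univ J} := by
    ext J
    simp only [maximizers, Set.mem_ofPred_eq, GRule.stableIdx_univ_iff, satCount, Nat.cast_inj]
    rw [← card_univ, card_filter_eq_iff]
    simp
  have hlim := tendsto_indicator_exp_mul_div_sum _ satCount _ (fun J _ => hbound J)
    (by rw [hmaximizers]; exact h) I
  rw [hmaximizers] at hlim
  exact hlim.trans_eq (by rw [Set.indicator_apply]; rfl)

/-- Theorem 1 (second half): if Π has a stable model, the limiting normalized weight of
each stable model of Π is 1/k (k = number of stable models of Π) and every other
interpretation has limiting normalized weight 0. -/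
theorem stmt5 {σ ι : Type} [Fintype σ] [DecidableEq σ] [Fintype ι]
    (rule : ι → GRule σ)
    (h : ∃ I : Finset σ, GRule.stableIdx rule Set.univ I) (I : Finset σ) :
    Tendsto (fun α : ℝ => Whard rule α I / ∑ J : Finset σ, Whard rule α J) atTop
      (nhds (if GRule.stableIdx rule Set.univ I
        then 1 / (Nat.card {J : Finset σ // GRule.stableIdx rule Set.univ J} : ℝ)
        else 0)) :=
  stmt5_general rule h I
end

section
/- Let ⟨Π, CONSTR⟩ be a logic program with weak constraints such that Π has a stable model, and let Π' be its LP^MLN translation (hard weight α on rules of Π, weight −Weight(C) on ⊥ ← Body(C) for each weak constraint C). Then I is a stable model of Π (ignoring weak constraints) if and only if I ∈ SM'[Π']. -/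
open Finset Filter Real
open scoped Classical

section WeakConstraints
variable {σ κ : Type} [Fintype σ] [DecidableEq σ] [Fintype κ]

/-- Satisfaction of the body of weak constraint `C` (positive atoms `pos C`,
negative part `negc C`). -/
def bodySat (pos : κ → Finset σ) (negc : κ → Finset σ → Prop) (C : κ) (I : Finset σ) : Prop :=
  pos C ⊆ I ∧ negc C I

/-- Penalty of an interpretation: sum of weights of weak constraints whose body it satisfies. -/
noncomputable def Penalty (pos : κ → Finset σ) (negc : κ → Finset σ → Prop)
    (Weight : κ → ℕ) (I : Finset σ) : ℕ :=
  ∑ C ∈ Finset.univ.filter (fun C => bodySat pos negc C I), Weight C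

/-- The LP^MLN soft rule `⊥ ← Body(C)` obtained from weak constraint `C`. -/
def conRule (pos : κ → Finset σ) (negc : κ → Finset σ → Prop) (C : κ) : GRule σ :=
  ⟨∅, pos C, negc C⟩

/-- The rules of the translated program Π' that are satisfied by `I`
(assuming `I` satisfies all hard rules, these are all of Π plus the satisfied constraints). -/
def transSat (Pg : Set (GRule σ)) (pos : κ → Finset σ) (negc : κ → Finset σ → Prop)
    (I : Finset σ) : Set (GRule σ) :=
  {r | r ∈ Pg ∧ r.sat I} ∪ {r | ∃ C, r = conRule pos negc C ∧ (conRule pos negc C).sat I}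

/-- `SM'[Π']` for the translation of a program with weak constraints. -/
def SMweak (Pg : Set (GRule σ)) (pos : κ → Finset σ) (negc : κ → Finset σ → Prop)
    (I : Finset σ) : Prop :=
  (∀ r ∈ Pg, r.sat I) ∧ GRule.stable (transSat Pg pos negc I) I

/-- `W'` of the translated program: exp of the sum of the weights `−Weight C` of the
satisfied soft rules, on `SM'`, and `0` elsewhere. -/
noncomputable def Wweak (Pg : Set (GRule σ)) (pos : κ → Finset σ) (negc : κ → Finset σ → Prop)
    (Weight : κ → ℕ) (I : Finset σ) : ℝ :=
  Set.indicator {J | SMweak Pg pos negc J}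
    (fun J => Real.exp
      (∑ C ∈ Finset.univ.filter (fun C => (conRule pos negc C).sat J), -(Weight C : ℝ))) I

/-- Normalized weight `P'` of the translated program. -/
noncomputable def Pweak (Pg : Set (GRule σ)) (pos : κ → Finset σ) (negc : κ → Finset σ → Prop)
    (Weight : κ → ℕ) (I : Finset σ) : ℝ :=
  Wweak Pg pos negc Weight I / ∑ J : Finset σ, Wweak Pg pos negc Weight J

end WeakConstraints

/-! Stable models are unaffected by adding constraints (rules with empty head) that `I` satisfies:
below `I`, the body of such a constraint can never be contained in a candidate model of the reduct.
A stable model of `Π` satisfies every rule of `Π`, so the rules of `Π'` it satisfies are exactly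
`Π` together with such constraints. -/

namespace GRule
variable {σ : Type}

theorem satReduct_self_iff {Γ : Set (GRule σ)} {I : Finset σ} :
    satReduct Γ I I ↔ ∀ r ∈ Γ, r.sat I :=
  forall₂_congr fun _ _ => Imp.swap

theorem forall_sat_of_stable {Γ : Set (GRule σ)} {I : Finset σ} (hI : stable Γ I) :
    ∀ r ∈ Γ, r.sat I :=
  satReduct_self_iff.1 hI.1

theorem satReduct_union_iff_of_constraints {Γ Δ : Set (GRule σ)} {I J : Finset σ}
    (hΔ : ∀ r ∈ Δ, r.head = ∅ ∧ r.sat I) (hJ : J ⊆ I) :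
    satReduct (Γ ∪ Δ) I J ↔ satReduct Γ I J := by
  refine ⟨fun h r hr => h r (Or.inl hr), ?_⟩
  rintro h r (hr | hr) hneg hbody
  · exact h r hr hneg hbody
  · obtain ⟨hhead, hsat⟩ := hΔ r hr
    obtain ⟨a, ha, -⟩ := hsat (hbody.trans hJ) hneg
    simp [hhead] at ha

theorem stable_union_iff_of_constraints {Γ Δ : Set (GRule σ)} {I : Finset σ}
    (hΔ : ∀ r ∈ Δ, r.head = ∅ ∧ r.sat I) :
    stable (Γ ∪ Δ) I ↔ stable Γ I := by
  simp only [stable, satReduct_union_iff_of_constraints hΔ subset_rfl]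
  exact and_congr_right fun _ =>
    forall_congr' fun J => forall_congr' fun hJ =>
      not_congr (satReduct_union_iff_of_constraints hΔ hJ.subset)

end GRule

theorem stmt7_general {σ κ : Type}
    (Pg : Set (GRule σ)) (pos : κ → Finset σ) (negc : κ → Finset σ → Prop)
    (I : Finset σ) :
    GRule.stable Pg I ↔ SMweak Pg pos negc I := by
  have hcon : ∀ r ∈ {r | ∃ C, r = conRule pos negc C ∧ (conRule pos negc C).sat I},
      r.head = ∅ ∧ r.sat I := by
    rintro _ ⟨C, rfl, hC⟩
    exact ⟨rfl, hC⟩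
  unfold SMweak transSat
  rw [GRule.stable_union_iff_of_constraints hcon]
  refine ⟨fun hI => ?_, fun ⟨hsat, hI⟩ => ?_⟩
  · have hsat := GRule.forall_sat_of_stable hI
    exact ⟨hsat, by rwa [Set.sep_eq_self_iff_mem_true.2 hsat]⟩
  · rwa [Set.sep_eq_self_iff_mem_true.2 hsat] at hI

/-- Lemma: for a program with weak constraints such that Π has a stable model,
I is a stable model of Π iff I ∈ SM'[Π'] for the LP^MLN translation Π'. -/
theorem stmt7 {σ κ : Type} [Fintype σ] [DecidableEq σ] [Fintype κ]
    (Pg : Set (GRule σ)) (pos : κ → Finset σ) (negc : κ → Finset σ → Prop)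
    (Weight : κ → ℕ) (hW : ∀ C, 0 < Weight C)
    (h : ∃ I : Finset σ, GRule.stable Pg I) (I : Finset σ) :
    GRule.stable Pg I ↔ SMweak Pg pos negc I :=
  stmt7_general Pg pos negc I
end

section
/- Let Π be a ground LP^MLN program over a finite signature σ and let I be an interpretation. Then I satisfies the loop formulas of the unweighted program Π̄ (underlying all rules of Π) for every nonempty subset of atoms if and only if I satisfies the loop formulas of the unweighted program Π̄_I (consisting of the rules of Π satisfied by I) for every nonempty subset of atoms. -/
open Finset Filter Real
open scoped Classical

section Loops
variable {σ : Type}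

/-- External support formula `ES_Γ(L)`: some rule `A ← B ∧ N` of Γ with `A ∩ L ≠ ∅`,
`B ∩ L = ∅`, whose body `B ∧ N` holds in `I` and with all atoms of `A ∖ L` false in `I`. -/
def ES (Γ : Set (GRule σ)) (L : Finset σ) (I : Finset σ) : Prop :=
  ∃ r ∈ Γ, (∃ a ∈ r.head, a ∈ L) ∧ (∀ b ∈ r.body, b ∉ L) ∧
    r.body ⊆ I ∧ r.neg I ∧ ∀ b ∈ r.head, b ∉ L → b ∉ I

/-- Loop formula `LF_Γ(L) = L^∧ → ES_Γ(L)`. -/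
def LF (Γ : Set (GRule σ)) (L : Finset σ) (I : Finset σ) : Prop :=
  L ⊆ I → ES Γ L I

end Loops

section SupportBySatisfiedRules
variable {σ : Type} {Γ : Set (GRule σ)} {L I : Finset σ}

theorem GRule.sat_of_mem_head {r : GRule σ} {a : σ} (ha : a ∈ r.head) (haI : a ∈ I) :
    r.sat I :=
  fun _ _ => ⟨a, ha, haI⟩

theorem ES.mono {Δ : Set (GRule σ)} (hΓΔ : Γ ⊆ Δ) (h : ES Γ L I) : ES Δ L I := by
  obtain ⟨r, hr, hsupport⟩ := h
  exact ⟨r, hΓΔ hr, hsupport⟩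

/-- When `L ⊆ I`, a rule supporting `L` has a head atom in `I`, so it is satisfied by `I`. -/
theorem ES.restrict_sat (hLI : L ⊆ I) (h : ES Γ L I) : ES {r | r ∈ Γ ∧ r.sat I} L I := by
  obtain ⟨r, hr, ⟨a, ha, haL⟩, hsupport⟩ := h
  exact ⟨r, ⟨hr, GRule.sat_of_mem_head ha (hLI haL)⟩, ⟨a, ha, haL⟩, hsupport⟩

theorem LF_setOf_sat_iff : LF {r | r ∈ Γ ∧ r.sat I} L I ↔ LF Γ L I :=
  ⟨fun h hLI => (h hLI).mono fun _ hr => hr.1, fun h hLI => (h hLI).restrict_sat hLI⟩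

end SupportBySatisfiedRules

theorem stmt9_general {σ : Type} (Pg : Set (GRule σ)) (I : Finset σ) :
    (∀ L : Finset σ, L.Nonempty → LF Pg L I) ↔
      (∀ L : Finset σ, L.Nonempty → LF {r | r ∈ Pg ∧ r.sat I} L I) := by
  simp only [LF_setOf_sat_iff]

/-- Lemma 1: I satisfies all loop formulas of Π̄ iff I satisfies all loop formulas of
Π̄_I, the set of rules of Π satisfied by I. -/
theorem stmt9 {σ : Type} [Fintype σ] (Pg : Set (GRule σ)) (I : Finset σ) :
    (∀ L : Finset σ, L.Nonempty → LF Pg L I) ↔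
      (∀ L : Finset σ, L.Nonempty → LF {r | r ∈ Pg ∧ r.sat I} L I) :=
  stmt9_general Pg I
end

section
/- Let L be a finite set of weighted propositional formulas over a finite signature, partitioned into hard formulas L^hard (weight symbol α) and soft formulas (real weights), such that the set of hard formulas (with weights dropped) is classically satisfiable. Define W_α(I) = exp(α·|{F ∈ L^hard : I ⊨ F}| + Σ_{soft w:F, I ⊨ F} w) and P(I) = lim_{α→∞} W_α(I)/Σ_J W_α(J). Then: (1) if I satisfies all hard formulas, P(I) = exp(Σ_{soft w:F, I⊨F} w) / Σ_{J ⊨ L^hard} exp(Σ_{soft w:F, J⊨F} w); (2) if I violates some hard formula, P(I) = 0. -/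
open Finset Filter Real
open scoped Classical

/-- MLN weight with hard-weight parameter α: formulas in `hard` count α each, soft
formulas (the complement) contribute their real weights. -/
noncomputable def Wmln {σ ι : Type} [Fintype σ] [DecidableEq σ] [Fintype ι]
    (F : ι → Finset σ → Prop) (hard : Finset ι) (w : ι → ℝ) (α : ℝ) (I : Finset σ) : ℝ :=
  Real.exp (α * ((hard.filter (fun i => F i I)).card : ℝ) +
    ∑ i ∈ hardᶜ.filter (fun i => F i I), w i)

/-! Factoring `exp (α · |L^hard|)` out of every weight leaves `exp (soft J - α · violated J)`,
which tends to `exp (soft J)` when `J` violates no hard formula and to `0` otherwise. The limit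
of the normalized weight is then the quotient of these limits, whose denominator is positive
because some interpretation satisfies all hard formulas. -/

lemma tendsto_exp_sub_mul_natCast (s : ℝ) (n : ℕ) :
    Tendsto (fun α : ℝ => exp (s - α * n)) atTop (nhds (if n = 0 then exp s else 0)) := by
  rcases Nat.eq_zero_or_pos n with rfl | hn
  · simp
  · rw [if_neg hn.ne']
    have hlin : Tendsto (fun α : ℝ => α * n) atTop atTop :=
      tendsto_id.atTop_mul_const (Nat.cast_pos.mpr hn)
    exact tendsto_exp_atBot.comp
      (tendsto_atBot_add_const_left _ s (tendsto_neg_atTop_atBot.comp hlin))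

section MLN

variable {σ ι : Type} (F : ι → Finset σ → Prop) (hard : Finset ι) (w : ι → ℝ)

noncomputable def softWeight [Fintype ι] (J : Finset σ) : ℝ :=
  ∑ i ∈ hardᶜ.filter (fun i => F i J), w i

noncomputable def numViolated (J : Finset σ) : ℕ :=
  (hard.filter (fun i => ¬ F i J)).card

noncomputable def limitWeight [Fintype ι] (J : Finset σ) : ℝ :=
  if ∀ i ∈ hard, F i J then exp (softWeight F hard w J) else 0

lemma numViolated_eq_zero_iff (J : Finset σ) : numViolated F hard J = 0 ↔ ∀ i ∈ hard, F i J := by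
  simp [numViolated, filter_eq_empty_iff]

lemma Wmln_eq_exp_mul_exp [Fintype σ] [DecidableEq σ] [Fintype ι] (α : ℝ) (J : Finset σ) :
    Wmln F hard w α J =
      exp (α * hard.card) * exp (softWeight F hard w J - α * numViolated F hard J) := by
  have hcard : ((hard.filter (fun i => F i J)).card : ℝ) = hard.card - numViolated F hard J := by
    rw [numViolated, ← card_filter_add_card_filter_not (s := hard) (fun i => F i J)]
    push_cast
    ring
  rw [Wmln, ← exp_add, hcard, softWeight]
  congr 1
  ring

lemma tendsto_exp_softWeight_sub [Fintype ι] (J : Finset σ) :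
    Tendsto (fun α : ℝ => exp (softWeight F hard w J - α * numViolated F hard J)) atTop
      (nhds (limitWeight F hard w J)) := by
  simpa only [limitWeight, numViolated_eq_zero_iff] using
    tendsto_exp_sub_mul_natCast (softWeight F hard w J) (numViolated F hard J)

lemma sum_limitWeight [Fintype σ] [Fintype ι] :
    ∑ J, limitWeight F hard w J =
      ∑ J ∈ univ.filter (fun J : Finset σ => ∀ i ∈ hard, F i J), exp (softWeight F hard w J) :=
  (sum_filter _ _).symm

lemma sum_limitWeight_pos [Fintype σ] [Fintype ι] (hsat : ∃ I : Finset σ, ∀ i ∈ hard, F i I) :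
    0 < ∑ J, limitWeight F hard w J := by
  obtain ⟨I, hI⟩ := hsat
  rw [sum_limitWeight]
  exact sum_pos (fun J _ => exp_pos _) ⟨I, mem_filter.mpr ⟨mem_univ I, hI⟩⟩

lemma tendsto_Wmln_div_sum [Fintype σ] [DecidableEq σ] [Fintype ι]
    (hsat : ∃ I : Finset σ, ∀ i ∈ hard, F i I) (I : Finset σ) :
    Tendsto (fun α : ℝ => Wmln F hard w α I / ∑ J : Finset σ, Wmln F hard w α J) atTop
      (nhds (limitWeight F hard w I / ∑ J, limitWeight F hard w J)) := by
  simp_rw [Wmln_eq_exp_mul_exp, ← mul_sum, mul_div_mul_left _ _ (exp_ne_zero _)]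
  exact (tendsto_exp_softWeight_sub F hard w I).div
    (tendsto_finsetSum _ fun J _ => tendsto_exp_softWeight_sub F hard w J)
    (sum_limitWeight_pos F hard w hsat).ne'

end MLN

/-- Lemma (MLN with satisfiable hard formulas): in the limit α → ∞, an interpretation
satisfying all hard formulas gets probability proportional to the exp of its soft weight,
normalized over interpretations satisfying the hard part; any other interpretation gets
probability 0. -/
theorem stmt12 {σ ι : Type} [Fintype σ] [DecidableEq σ] [Fintype ι]
    (F : ι → Finset σ → Prop) (hard : Finset ι) (w : ι → ℝ)
    (hsat : ∃ I : Finset σ, ∀ i ∈ hard, F i I) (I : Finset σ) :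
    ((∀ i ∈ hard, F i I) →
      Tendsto (fun α : ℝ => Wmln F hard w α I / ∑ J : Finset σ, Wmln F hard w α J) atTop
        (nhds (Real.exp (∑ i ∈ hardᶜ.filter (fun i => F i I), w i) /
          ∑ J ∈ Finset.univ.filter (fun J : Finset σ => ∀ i ∈ hard, F i J),
            Real.exp (∑ i ∈ hardᶜ.filter (fun i => F i J), w i)))) ∧
    ((∃ i ∈ hard, ¬ F i I) →
      Tendsto (fun α : ℝ => Wmln F hard w α I / ∑ J : Finset σ, Wmln F hard w α J) atTop
        (nhds 0)) := by
  have hlim := tendsto_Wmln_div_sum F hard w hsat I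
  rw [sum_limitWeight] at hlim
  constructor
  · intro hI
    rwa [limitWeight, if_pos hI] at hlim
  · rintro ⟨i, hi, hFi⟩
    have hviol : ¬ ∀ i ∈ hard, F i I := fun h => hFi (h i hi)
    rwa [limitWeight, if_neg hviol, zero_div] at hlim
end

section
/- Let Π be an LP^MLN program over a finite signature with SM'[Π] nonempty, where each rule has weight α (hard) or a real weight (soft). For every interpretation I, the limit P_Π(I) = lim_{α→∞} W_Π(I)/Σ_{J ∈ SM[Π]} W_Π(J) exists and equals P'_Π(I) = W'_Π(I)/Σ_{J ∈ SM'[Π]} W'_Π(J), where W_Π(I) = exp(α·h_I + s_I) if I ∈ SM[Π] and 0 otherwise (h_I the number of hard rules satisfied by I, s_I the sum of soft weights of soft rules satisfied by I), SM[Π] = {I : I is a stable model of the rules of Π satisfied by I}, W'_Π(I) = exp(s_I) if I ∈ SM'[Π] and 0 otherwise, and SM'[Π] = {I ∈ SM[Π] : I satisfies all hard rules}. -/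
open Finset Filter Real
open scoped Classical

section LPMLN
variable {σ ι : Type} [Fintype σ] [DecidableEq σ] [Fintype ι]

/-- `SM[Π]`: stable models of the set of rules of Π they satisfy. -/
def SMall (rule : ι → GRule σ) : Set (Finset σ) :=
  {I | GRule.stableIdx rule {i | (rule i).sat I} I}

/-- `SM'[Π]`: members of `SM[Π]` satisfying all hard rules. -/
def SMprime (rule : ι → GRule σ) (soft : Finset ι) : Set (Finset σ) :=
  {I | I ∈ SMall rule ∧ ∀ i ∉ soft, (rule i).sat I}

/-- Number of hard rules satisfied by `I`. -/
noncomputable def hcount (rule : ι → GRule σ) (soft : Finset ι) (I : Finset σ) : ℕ :=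
  (softᶜ.filter (fun i => (rule i).sat I)).card

/-- Sum of the soft weights of the soft rules satisfied by `I`. -/
noncomputable def scount (rule : ι → GRule σ) (soft : Finset ι) (w : ι → ℝ)
    (I : Finset σ) : ℝ :=
  ∑ i ∈ soft.filter (fun i => (rule i).sat I), w i

/-- `W_Π(I)` with hard weight parameter α. -/
noncomputable def Wfull (rule : ι → GRule σ) (soft : Finset ι) (w : ι → ℝ) (α : ℝ)
    (I : Finset σ) : ℝ :=
  Set.indicator (SMall rule)
    (fun J => Real.exp (α * (hcount rule soft J : ℝ) + scount rule soft w J)) I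

/-- `W'_Π(I)`. -/
noncomputable def Wprime (rule : ι → GRule σ) (soft : Finset ι) (w : ι → ℝ)
    (I : Finset σ) : ℝ :=
  Set.indicator (SMprime rule soft) (fun J => Real.exp (scount rule soft w J)) I

end LPMLN

/-!
Multiplying every weight by `exp (-α H)`, where `H` is the number of hard rules, leaves the
normalized weights unchanged. After rescaling, the weight of a member of `SM'[Π]` becomes the
constant `exp s_I`, while a member of `SM[Π]` violating a hard rule keeps a factor
`exp (-α (H - h_I))` with `H - h_I ≥ 1` and so vanishes as `α → ∞`. The rescaled weights
thus converge to `W'_Π`, whose total is positive because `SM'[Π]` is nonempty.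
-/

theorem tendsto_div_sum_of_tendsto_mul {α κ K : Type*} [Fintype κ] [Field K]
    [TopologicalSpace K] [ContinuousAdd K] [ContinuousMul K] [ContinuousInv₀ K]
    {l : Filter α} {f : α → κ → K} {c : α → K} {g : κ → K} (hc : ∀ x, c x ≠ 0)
    (hf : ∀ k, Tendsto (fun x => f x k * c x) l (nhds (g k))) (hg : ∑ k, g k ≠ 0) (k : κ) :
    Tendsto (fun x => f x k / ∑ j, f x j) l (nhds (g k / ∑ j, g j)) := by
  have hsum : Tendsto (fun x => (∑ j, f x j) * c x) l (nhds (∑ j, g j)) := by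
    simpa only [Finset.sum_mul] using tendsto_finsetSum univ fun j _ => hf j
  exact ((hf k).div hsum hg).congr fun x => mul_div_mul_right _ _ (hc x)

theorem tendsto_exp_mul_atTop_of_neg {a : ℝ} (ha : a < 0) :
    Tendsto (fun x : ℝ => exp (x * a)) atTop (nhds 0) :=
  tendsto_exp_atBot.comp (tendsto_id.atTop_mul_const_of_neg ha)

section HardWeightLimit
variable {σ ι : Type} [Fintype ι] (rule : ι → GRule σ) (soft : Finset ι) (w : ι → ℝ)

theorem hcount_le_card_compl (I : Finset σ) : hcount rule soft I ≤ softᶜ.card :=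
  card_filter_le _ _

theorem hcount_eq_card_compl_iff (I : Finset σ) :
    hcount rule soft I = softᶜ.card ↔ ∀ i ∉ soft, (rule i).sat I := by
  simp only [hcount, card_filter_eq_iff, mem_compl]

theorem Wfull_mul_exp_neg {I : Finset σ} (hI : I ∈ SMall rule) (α : ℝ) :
    Wfull rule soft w α I * exp (-(α * softᶜ.card)) =
      exp (scount rule soft w I) * exp (α * (hcount rule soft I - softᶜ.card : ℝ)) := by
  rw [Wfull, Set.indicator_of_mem hI, ← exp_add, ← exp_add]
  ring_nf

theorem tendsto_Wfull_mul_exp_neg (I : Finset σ) :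
    Tendsto (fun α => Wfull rule soft w α I * exp (-(α * softᶜ.card))) atTop
      (nhds (Wprime rule soft w I)) := by
  by_cases hI : I ∈ SMall rule
  swap
  · have hI' : I ∉ SMprime rule soft := fun h => hI h.1
    simp only [Wfull, Wprime, Set.indicator_of_notMem hI, Set.indicator_of_notMem hI', zero_mul]
    exact tendsto_const_nhds
  simp_rw [Wfull_mul_exp_neg rule soft w hI]
  rcases (hcount_le_card_compl rule soft I).eq_or_lt with heq | hlt
  · have hI' : I ∈ SMprime rule soft := ⟨hI, (hcount_eq_card_compl_iff rule soft I).1 heq⟩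
    simp only [heq, sub_self, mul_zero, exp_zero, mul_one, Wprime, Set.indicator_of_mem hI']
    exact tendsto_const_nhds
  · have hI' : I ∉ SMprime rule soft := fun h =>
      hlt.ne ((hcount_eq_card_compl_iff rule soft I).2 h.2)
    rw [Wprime, Set.indicator_of_notMem hI', ← mul_zero (exp _)]
    refine (tendsto_exp_mul_atTop_of_neg ?_).const_mul _
    rw [sub_neg]
    exact_mod_cast hlt

end HardWeightLimit

theorem sum_Wprime_pos {σ ι : Type} [Fintype σ] (rule : ι → GRule σ) (soft : Finset ι)
    (w : ι → ℝ) (hne : (SMprime rule soft).Nonempty) :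
    0 < ∑ J : Finset σ, Wprime rule soft w J := by
  obtain ⟨J, hJ⟩ := hne
  refine sum_pos' (fun I _ => Set.indicator_nonneg (fun _ _ => (exp_pos _).le) _)
    ⟨J, mem_univ J, ?_⟩
  rw [Wprime, Set.indicator_of_mem hJ]
  exact exp_pos _

theorem stmt13_general {σ ι : Type} [Fintype σ] [Fintype ι]
    (rule : ι → GRule σ) (soft : Finset ι) (w : ι → ℝ)
    (hne : (SMprime rule soft).Nonempty) (I : Finset σ) :
    Tendsto
      (fun α : ℝ => Wfull rule soft w α I / ∑ J : Finset σ, Wfull rule soft w α J) atTop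
      (nhds (Wprime rule soft w I / ∑ J : Finset σ, Wprime rule soft w J)) :=
  tendsto_div_sum_of_tendsto_mul (fun _ => exp_ne_zero _)
    (tendsto_Wfull_mul_exp_neg rule soft w) (sum_Wprime_pos rule soft w hne).ne' I

/-- Proposition 2: if `SM'[Π]` is nonempty then for every interpretation `I`, the limit
as α → ∞ of the normalized weight `P_Π(I)` exists and equals `P'_Π(I)`. -/
theorem stmt13 {σ ι : Type} [Fintype σ] [DecidableEq σ] [Fintype ι]
    (rule : ι → GRule σ) (soft : Finset ι) (w : ι → ℝ)
    (hne : (SMprime rule soft).Nonempty) (I : Finset σ) :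
    Tendsto
      (fun α : ℝ => Wfull rule soft w α I / ∑ J : Finset σ, Wfull rule soft w α J) atTop
      (nhds (Wprime rule soft w I / ∑ J : Finset σ, Wprime rule soft w J)) :=
  stmt13_general rule soft w hne I
end

section
/- Let Γ be a ground logic program over a finite signature and I an interpretation that satisfies Γ. Then I is a stable model of Γ if and only if for every nonempty subset L of the atoms, I satisfies the loop formula L^∧ → ES_Γ(L). -/
/-! A subset `J ⊂ I` violating the reduct `Γ^I` is the same thing as a rule of `Γ` supporting the
loop `L = I \ J` from outside, i.e. a witness of `ES_Γ(L)` in `I`. Minimality of `I` among the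
models of `Γ^I` is therefore exactly the loop formulas of the nonempty `L ⊆ I`; loop formulas of
the other `L` hold vacuously. -/

open Finset Filter Real
open scoped Classical

theorem GRule.satReduct_self_of_sat_s17 {σ : Type} {Γ : Set (GRule σ)} {I : Finset σ}
    (hsat : ∀ r ∈ Γ, r.sat I) : satReduct Γ I I :=
  fun r hr hneg hbody => hsat r hr hbody hneg

theorem es_sdiff_iff_not_satReduct {σ : Type} {Γ : Set (GRule σ)} {I J : Finset σ}
    (hI : GRule.satReduct Γ I I) (hJ : J ⊆ I) :
    ES Γ (I \ J) I ↔ ¬ GRule.satReduct Γ I J := by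
  constructor
  · rintro ⟨r, hr, -, hbodyL, hbodyI, hneg, hheadL⟩ hJsat
    have hbodyJ : r.body ⊆ J := fun b hb => by
      by_contra hbJ
      exact hbodyL b hb (mem_sdiff.2 ⟨hbodyI hb, hbJ⟩)
    obtain ⟨c, hcH, hcJ⟩ := hJsat r hr hneg hbodyJ
    exact hheadL c hcH (fun hc => (mem_sdiff.1 hc).2 hcJ) (hJ hcJ)
  · intro hJsat
    simp only [GRule.satReduct, not_forall, not_exists, not_and] at hJsat
    obtain ⟨r, hr, hneg, hbodyJ, hheadJ⟩ := hJsat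
    obtain ⟨a, haH, haI⟩ := hI r hr hneg (hbodyJ.trans hJ)
    refine ⟨r, hr, ⟨a, haH, mem_sdiff.2 ⟨haI, hheadJ a haH⟩⟩,
      fun b hb hbL => (mem_sdiff.1 hbL).2 (hbodyJ hb), hbodyJ.trans hJ, hneg, ?_⟩
    intro b hbH hbL hbI
    exact hbL (mem_sdiff.2 ⟨hbI, hheadJ b hbH⟩)

theorem stmt17_general {σ : Type} (Γ : Set (GRule σ)) (I : Finset σ)
    (hsat : ∀ r ∈ Γ, r.sat I) :
    GRule.stable Γ I ↔ ∀ L : Finset σ, L.Nonempty → LF Γ L I := by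
  have hI := GRule.satReduct_self_of_sat_s17 hsat
  constructor
  · rintro ⟨-, hmin⟩ L hL hLI
    have hviol := hmin (I \ L) (sdiff_ssubset hLI hL)
    rwa [← es_sdiff_iff_not_satReduct hI sdiff_subset, Finset.sdiff_sdiff_eq_self hLI] at hviol
  · refine fun hLF => ⟨hI, fun J hJ => ?_⟩
    rw [← es_sdiff_iff_not_satReduct hI hJ.subset]
    exact hLF (I \ J) (sdiff_nonempty.2 hJ.not_subset) sdiff_subset

/-- Loop-formula theorem (Lin–Zhao / Ferraris–Lee–Lifschitz, finite ground case):
for an interpretation satisfying Γ, I is a stable model of Γ iff I satisfies the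
loop formula of every nonempty set of atoms. -/
theorem stmt17 {σ : Type} [Fintype σ] (Γ : Set (GRule σ)) (I : Finset σ)
    (hsat : ∀ r ∈ Γ, r.sat I) :
    GRule.stable Γ I ↔ ∀ L : Finset σ, L.Nonempty → LF Γ L I :=
  stmt17_general Γ I hsat
end

section
/- Let P = ⟨PF, Π⟩ be a ground ProbLog program with probabilistic facts p_i :: a_i (0 < p_i < 1) whose translation P' to LP^MLN contains soft rules ln(p_i) : a_i and ln(1−p_i) : ⊥ ← a_i for each probabilistic fact, and hard rules α : R for each R ∈ Π. Then for any interpretation I whose total choice is TC(I) = {a_i : I ⊨ a_i}, the sum of the weights of the soft rules of P' satisfied by I equals ln(∏_{a_i ∈ TC(I)} p_i · ∏_{a_j ∉ TC(I)} (1 − p_j)); hence exp of that sum equals the ProbLog probability Pr_P(TC(I)) of the total choice of I. -/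
open Finset Filter Real
open scoped Classical

theorem Real.sum_ite_log_eq_log_mul_prod {ι : Type*} (s : Finset ι) (p : ι → Prop)
    [DecidablePred p] {f g : ι → ℝ} (hf : ∀ a ∈ s, p a → f a ≠ 0)
    (hg : ∀ a ∈ s, ¬p a → g a ≠ 0) :
    ∑ a ∈ s, (if p a then log (f a) else log (g a)) =
      log ((∏ a ∈ s.filter p, f a) * ∏ a ∈ s.filter (fun a => ¬p a), g a) := by
  have hf' : ∀ a ∈ s.filter p, f a ≠ 0 := fun a ha =>
    hf a (mem_filter.1 ha).1 (mem_filter.1 ha).2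
  have hg' : ∀ a ∈ s.filter (fun a => ¬p a), g a ≠ 0 := fun a ha =>
    hg a (mem_filter.1 ha).1 (mem_filter.1 ha).2
  rw [log_mul (prod_ne_zero_iff.2 hf') (prod_ne_zero_iff.2 hg'), log_prod hf', log_prod hg',
    sum_ite]

/-- For the LP^MLN translation of a ProbLog program, the sum of the weights of the soft
rules satisfied by I (ln p_i if a_i ∈ I, ln (1−p_i) otherwise) equals the log of the
total-choice probability of I, and its exp equals that probability. -/
theorem stmt18 {σ : Type} [DecidableEq σ] (pa : Finset σ) (pr : σ → ℝ)
    (hp : ∀ a ∈ pa, 0 < pr a ∧ pr a < 1) (I : Finset σ) :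
    (∑ a ∈ pa, (if a ∈ I then Real.log (pr a) else Real.log (1 - pr a)) =
        Real.log ((∏ a ∈ pa.filter (fun a => a ∈ I), pr a) *
          ∏ a ∈ pa.filter (fun a => a ∉ I), (1 - pr a))) ∧
      Real.exp (∑ a ∈ pa, (if a ∈ I then Real.log (pr a) else Real.log (1 - pr a))) =
        (∏ a ∈ pa.filter (fun a => a ∈ I), pr a) *
          ∏ a ∈ pa.filter (fun a => a ∉ I), (1 - pr a) := by
  have hpos : 0 < (∏ a ∈ pa.filter (fun a => a ∈ I), pr a) *
      ∏ a ∈ pa.filter (fun a => a ∉ I), (1 - pr a) :=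
    mul_pos (prod_pos fun a ha => (hp a (mem_filter.1 ha).1).1)
      (prod_pos fun a ha => sub_pos.2 (hp a (mem_filter.1 ha).1).2)
  have hlog := Real.sum_ite_log_eq_log_mul_prod pa (· ∈ I)
    (fun a ha _ => (hp a ha).1.ne') (fun a ha _ => (sub_pos.2 (hp a ha).2).ne')
  exact ⟨hlog, by rw [hlog, exp_log hpos]⟩
end
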